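/- Let k ≥ 1 and N ≥ 1 satisfy k·2^k ≤ 2^{N+2} (i.e. N ≥ k + log₂k − 2). Fix a partition of {1,…,N} into L regions, let f be a complex-valued function on assignments T⃗ of elements of Σ_{k,k} to the regions, let ε ≥ 0 with ∑_{T⃗}|f(T⃗)| ≤ ε, and suppose ρ = 2^{−Nk}·( ∑_{T ∈ Σ_{k,k}} R_N(T) + ∑_{T⃗} f(T⃗)·R(T⃗) ). Assume (as holds by the Gross–Nezami–Walter moment formula) that ρ_C^{(k)} is positive semidefinite with trace 1. Then ‖ρ − ρ_C^{(k)}‖₁ ≤ ε + k·2^{k−N}. (This is the paper's theorem that a state ensemble satisfying the ε-approximate uniformity condition forms a stabilizer state k-design with additive error ε + k·2^{k−N}.) -/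

import Mathlib

open MeasureTheory Matrix
open scoped ComplexOrder Classical BigOperators

noncomputable section

/-- Trace norm of a complex matrix: `‖M‖₁ = Tr √(Mᴴ M)`, the sum of singular values. -/
def traceNorm {n : Type*} [Fintype n] [DecidableEq n] (M : Matrix n n ℂ) : ℝ :=
  (((Matrix.posSemidef_conjTranspose_mul_self M).1.eigenvectorUnitary.1 *
    diagonal (((↑) : ℝ → ℂ) ∘ (√·) ∘ (Matrix.posSemidef_conjTranspose_mul_self M).1.eigenvalues) *
    (star (Matrix.posSemidef_conjTranspose_mul_self M).1.eigenvectorUnitary :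
      Matrix n n ℂ)).trace).re

/-- A stochastic Lagrangian subspace `T ⊆ 𝔽₂^{2k}`: an `𝔽₂`-linear subspace of
dimension `k` containing the all-ones vector, with `∑ᵢ x̃ᵢ ≡ ∑ᵢ ỹᵢ (mod 4)` for all
`(x, y) ∈ T`. -/
def IsStochasticLagrangian (k : ℕ)
    (T : Submodule (ZMod 2) ((Fin k → ZMod 2) × (Fin k → ZMod 2))) : Prop :=
  Module.finrank (ZMod 2) T = k ∧
  ((fun _ => 1, fun _ => 1) : (Fin k → ZMod 2) × (Fin k → ZMod 2)) ∈ T ∧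
  ∀ p ∈ T, (∑ i, (((p.1 i).val : ZMod 4))) = ∑ i, (((p.2 i).val : ZMod 4))

/-- The (finite) set `Σ_{k,k}` of stochastic Lagrangian subspaces. -/
def StochLag (k : ℕ) : Type :=
  {T : Submodule (ZMod 2) ((Fin k → ZMod 2) × (Fin k → ZMod 2)) // IsStochasticLagrangian k T}

instance (k : ℕ) : Finite (StochLag k) := by
  have h : Finite (Submodule (ZMod 2) ((Fin k → ZMod 2) × (Fin k → ZMod 2))) :=
    Finite.of_injective
      (fun T => (T : Set ((Fin k → ZMod 2) × (Fin k → ZMod 2)))) SetLike.coe_injective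
  exact Subtype.finite

instance (k : ℕ) : Fintype (StochLag k) := Fintype.ofFinite _

/-- `R(T⃗)`: the operator attached to an assignment `T⃗` of stochastic Lagrangian
subspaces to the regions of a partition (given by `reg`) of the `N` qubits, on the
`k`-fold space with basis indexed by maps `{1,…,N} → 𝔽₂ᵏ`. -/
def Rvec (k : ℕ) {N : ℕ} {ι : Type*} (reg : Fin N → ι) (Tv : ι → StochLag k) :
    Matrix (Fin k → Fin N → ZMod 2) (Fin k → Fin N → ZMod 2) ℂ :=
  Matrix.of fun X Y => ∏ i : Fin N,
    (if ((fun a => X a i, fun a => Y a i) :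
        (Fin k → ZMod 2) × (Fin k → ZMod 2)) ∈ (Tv (reg i)).1 then (1 : ℂ) else 0)

/-- `R_N(T)` for a single, spatially uniform `T ∈ Σ_{k,k}`. -/
def RN (k N : ℕ) (T : StochLag k) :
    Matrix (Fin k → Fin N → ZMod 2) (Fin k → Fin N → ZMod 2) ℂ :=
  Rvec k (fun _ : Fin N => (() : Unit)) (fun _ => T)

/-- `Z_{N,k} = 2^N ∏_{i=0}^{k-2} (2^N + 2^i)`. -/
def Zc (N k : ℕ) : ℂ := 2 ^ N * ∏ i ∈ Finset.range (k - 1), ((2 : ℂ) ^ N + 2 ^ i)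

/-- `ρ_C^{(k)} = Z_{N,k}⁻¹ ∑_{T ∈ Σ_{k,k}} R_N(T)`, the `k`-th moment of a uniformly
random `N`-qubit stabilizer state (Gross–Nezami–Walter). -/
def rhoC (k N : ℕ) : Matrix (Fin k → Fin N → ZMod 2) (Fin k → Fin N → ZMod 2) ℂ :=
  (Zc N k)⁻¹ • ∑ T : StochLag k, RN k N T

section SqrtPort
open scoped MatrixOrder
variable {n : Type*} [Fintype n] [DecidableEq n]

def Matrix.PosSemidef.sqrt {A : Matrix n n ℂ} (hA : A.PosSemidef) : Matrix n n ℂ :=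
  hA.1.eigenvectorUnitary.1 * diagonal (((↑) : ℝ → ℂ) ∘ (√·) ∘ hA.1.eigenvalues) *
    (star hA.1.eigenvectorUnitary : Matrix n n ℂ)

theorem Matrix.PosSemidef.sqrt_eq_cfc' {A : Matrix n n ℂ} (hA : A.PosSemidef) :
    hA.sqrt = CFC.sqrt A := by
  rw [CFC.sqrt_eq_cfc, cfc_nnreal_eq_real _ A hA.nonneg, hA.1.cfc_eq]
  rw [Matrix.IsHermitian.cfc, Unitary.conjStarAlgAut_apply, Matrix.PosSemidef.sqrt]
  congr 3
  funext x
  simp [Real.coe_sqrt, Real.coe_toNNReal', Real.sqrt_eq_zero', max_def]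
  split_ifs with h <;> simp_all [Real.sqrt_eq_zero']

theorem Matrix.PosSemidef.posSemidef_sqrt {A : Matrix n n ℂ} (hA : A.PosSemidef) :
    hA.sqrt.PosSemidef := by
  rw [hA.sqrt_eq_cfc']
  exact Matrix.nonneg_iff_posSemidef.mp (CFC.sqrt_nonneg A)

theorem Matrix.PosSemidef.sq_sqrt {A : Matrix n n ℂ} (hA : A.PosSemidef) :
    hA.sqrt ^ 2 = A := by
  rw [hA.sqrt_eq_cfc']
  exact CFC.sq_sqrt A hA.nonneg

theorem Matrix.PosSemidef.sqrt_mul_self {A : Matrix n n ℂ} (hA : A.PosSemidef) :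
    hA.sqrt * hA.sqrt = A := by
  rw [hA.sqrt_eq_cfc']
  exact CFC.sqrt_mul_sqrt_self A hA.nonneg

theorem Matrix.PosSemidef.eq_sqrt_of_sq_eq {B : Matrix n n ℂ} (hB : B.PosSemidef)
    (A : Matrix n n ℂ) {hA : A.PosSemidef} (h : B ^ 2 = A) : B = hA.sqrt := by
  rw [hA.sqrt_eq_cfc', ← h, CFC.sqrt_sq B hB.nonneg]

theorem traceNorm_eq (M : Matrix n n ℂ) :
    traceNorm M = ((Matrix.posSemidef_conjTranspose_mul_self M).sqrt.trace).re := rfl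

end SqrtPort

namespace TNAux

set_option linter.unusedSectionVars false
variable {ι : Type*} [Fintype ι] [DecidableEq ι]

lemma traceNorm_psd {P : Matrix ι ι ℂ} (hP : P.PosSemidef) :
    traceNorm P = (P.trace).re := by
  rw [traceNorm_eq]
  have h : P = (Matrix.posSemidef_conjTranspose_mul_self P).sqrt := by
    refine hP.eq_sqrt_of_sq_eq _ ?_
    rw [pow_two, hP.1.eq]
  rw [← h]

lemma posSemidef_real_smul {S : Matrix ι ι ℂ} (hS : S.PosSemidef) {r : ℝ} (hr : 0 ≤ r) :
    ((r : ℂ) • S).PosSemidef := by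
  refine Matrix.PosSemidef.of_dotProduct_mulVec_nonneg ?_ ?_
  · unfold Matrix.IsHermitian
    rw [Matrix.conjTranspose_smul, hS.1.eq]
    congr 1
    simp
  · intro x
    simp only [Matrix.smul_mulVec, dotProduct_smul]
    have h0 : 0 ≤ (r : ℂ) := by
      rw [Complex.le_def]; simp [hr]
    exact mul_nonneg h0 (hS.dotProduct_mulVec_nonneg x)

lemma traceNorm_smul (c : ℂ) (M : Matrix ι ι ℂ) :
    traceNorm (c • M) = ‖c‖ * traceNorm M := by
  rw [traceNorm_eq, traceNorm_eq]
  set S := (Matrix.posSemidef_conjTranspose_mul_self M).sqrt with hSdef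
  have hS : S.PosSemidef := (Matrix.posSemidef_conjTranspose_mul_self M).posSemidef_sqrt
  have key : ((‖c‖ : ℂ) • S) = (Matrix.posSemidef_conjTranspose_mul_self (c • M)).sqrt := by
    refine (posSemidef_real_smul hS (norm_nonneg c)).eq_sqrt_of_sq_eq _ ?_
    have : (c • M)ᴴ * (c • M) = (star c * c) • (Mᴴ * M) := by
      rw [Matrix.conjTranspose_smul]
      rw [Matrix.smul_mul, Matrix.mul_smul, smul_smul]
    rw [this, smul_pow, (Matrix.posSemidef_conjTranspose_mul_self M).sq_sqrt]
    congr 1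
    rw [← Complex.ofReal_pow, Complex.sq_norm, Complex.star_def, mul_comm,
      Complex.mul_conj]
  rw [← key, Matrix.trace_smul]
  simp [Complex.smul_re]

lemma traceNorm_zero : traceNorm (0 : Matrix ι ι ℂ) = 0 := by
  have := traceNorm_smul (0 : ℂ) (0 : Matrix ι ι ℂ)
  simpa using this

end TNAux

section Polar
set_option linter.unusedSectionVars false
variable {ι : Type*} [Fintype ι] [DecidableEq ι]

private lemma real_e1 {l : ℝ} (hl : 0 ≤ l) : (Real.sqrt l)⁻¹ * l = Real.sqrt l := by
  rcases eq_or_lt_of_le hl with h | h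
  · simp [← h]
  · have hs : Real.sqrt l ≠ 0 := by positivity
    calc (Real.sqrt l)⁻¹ * l = (Real.sqrt l)⁻¹ * (Real.sqrt l * Real.sqrt l) := by
          rw [Real.mul_self_sqrt hl]
      _ = Real.sqrt l := by rw [← mul_assoc, inv_mul_cancel₀ hs, one_mul]

private lemma real_e2 {l : ℝ} (hl : 0 ≤ l) :
    Real.sqrt l * (Real.sqrt l)⁻¹ = if l = 0 then 0 else 1 := by
  split_ifs with h
  · simp [h]
  · have : 0 < l := lt_of_le_of_ne hl (Ne.symm h)
    exact mul_inv_cancel₀ (by positivity)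

lemma exists_polar (A : Matrix ι ι ℂ) :
    ∃ V : Matrix ι ι ℂ, (1 - Vᴴ * V).PosSemidef ∧
      Vᴴ * A = (Matrix.posSemidef_conjTranspose_mul_self A).sqrt ∧
      V * (Matrix.posSemidef_conjTranspose_mul_self A).sqrt = A := by
  have hH := Matrix.posSemidef_conjTranspose_mul_self A
  set U : Matrix ι ι ℂ := (hH.1.eigenvectorUnitary : Matrix ι ι ℂ) with hUdef
  set lam : ι → ℝ := hH.1.eigenvalues with hlamdef
  have hlam0 : ∀ i, 0 ≤ lam i := hH.eigenvalues_nonneg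
  have hUU : Uᴴ * U = 1 := by
    rw [← Matrix.star_eq_conjTranspose]
    exact Matrix.mem_unitaryGroup_iff'.mp hH.1.eigenvectorUnitary.2
  have hUU' : U * Uᴴ = 1 := by
    rw [← Matrix.star_eq_conjTranspose]
    exact Matrix.mem_unitaryGroup_iff.mp hH.1.eigenvectorUnitary.2
  set lamC : ι → ℂ := fun i => ((lam i : ℝ) : ℂ) with hlamC
  set sqC : ι → ℂ := fun i => ((Real.sqrt (lam i) : ℝ) : ℂ) with hsqC
  set gC : ι → ℂ := fun i => (((Real.sqrt (lam i))⁻¹ : ℝ) : ℂ) with hgC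
  set pC : ι → ℂ := fun i => if lam i = 0 then (0 : ℂ) else 1 with hpC
  -- pointwise identities
  have e1 : (fun i => gC i * lamC i) = sqC := by
    funext i
    simp only [hgC, hlamC, hsqC, ← Complex.ofReal_mul]
    exact congrArg Complex.ofReal (real_e1 (hlam0 i))
  have e2 : (fun i => sqC i * gC i) = pC := by
    funext i
    simp only [hsqC, hgC, hpC, ← Complex.ofReal_mul, real_e2 (hlam0 i)]
    split_ifs <;> simp
  have e3 : (fun i => gC i * sqC i) = pC := by
    funext i
    simp only [hsqC, hgC, hpC, ← Complex.ofReal_mul, mul_comm ((Real.sqrt (lam i))⁻¹),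
      real_e2 (hlam0 i)]
    split_ifs <;> simp
  have e4 : (fun i => (fun i => (1 - pC i) * lamC i) i * (1 - pC i)) = fun _ => (0 : ℂ) := by
    funext i
    simp only [hpC, hlamC]
    split_ifs with h <;> simp [h]
  have hmul : ∀ d e : ι → ℂ,
      (U * Matrix.diagonal d * Uᴴ) * (U * Matrix.diagonal e * Uᴴ)
        = U * Matrix.diagonal (fun i => d i * e i) * Uᴴ := by
    intro d e
    have h : Matrix.diagonal d * Matrix.diagonal e = Matrix.diagonal (fun i => d i * e i) :=
      Matrix.diagonal_mul_diagonal d e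
    calc (U * Matrix.diagonal d * Uᴴ) * (U * Matrix.diagonal e * Uᴴ)
        = U * Matrix.diagonal d * (Uᴴ * U) * Matrix.diagonal e * Uᴴ := by
          simp only [Matrix.mul_assoc]
      _ = U * Matrix.diagonal (fun i => d i * e i) * Uᴴ := by
          rw [hUU, Matrix.mul_one, Matrix.mul_assoc U, h]
  have hspec : Aᴴ * A = U * Matrix.diagonal lamC * Uᴴ := by
    have h := hH.1.spectral_theorem
    rw [Unitary.conjStarAlgAut_apply] at h
    rw [← Matrix.star_eq_conjTranspose U]
    exact h
  have hSspec : (Matrix.posSemidef_conjTranspose_mul_self A).sqrt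
      = U * Matrix.diagonal sqC * Uᴴ := rfl
  set G : Matrix ι ι ℂ := U * Matrix.diagonal gC * Uᴴ with hGdef
  set V : Matrix ι ι ℂ := A * G with hVdef
  have hdiagH : ∀ (d : ι → ℂ), (∀ i, star (d i) = d i) →
      (U * Matrix.diagonal d * Uᴴ)ᴴ = U * Matrix.diagonal d * Uᴴ := by
    intro d hd
    rw [Matrix.conjTranspose_mul, Matrix.conjTranspose_mul, Matrix.diagonal_conjTranspose,
      Matrix.conjTranspose_conjTranspose]
    have h : star d = d := funext hd
    rw [h, Matrix.mul_assoc]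
  have hGH : Gᴴ = G := hdiagH gC (fun i => by simp [hgC, Complex.conj_ofReal])
  have hVA : Vᴴ * A = (Matrix.posSemidef_conjTranspose_mul_self A).sqrt := by
    rw [hSspec, hVdef, Matrix.conjTranspose_mul, hGH, Matrix.mul_assoc, hspec, hGdef, hmul, e1]
  have hVV : Vᴴ * V = U * Matrix.diagonal pC * Uᴴ := by
    rw [hVdef, ← Matrix.mul_assoc, hVA, hSspec, hGdef, hmul, e2]
  have hone : (1 : Matrix ι ι ℂ) = U * Matrix.diagonal (fun _ => (1:ℂ)) * Uᴴ := by
    rw [Matrix.diagonal_one, Matrix.mul_one, hUU']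
  have hsubdiag : (1 : Matrix ι ι ℂ) - U * Matrix.diagonal pC * Uᴴ
      = U * Matrix.diagonal (fun i => 1 - pC i) * Uᴴ := by
    rw [hone, ← Matrix.sub_mul, ← Matrix.mul_sub, ← Matrix.diagonal_sub]
  refine ⟨V, ?_, hVA, ?_⟩
  · rw [hVV, hsubdiag]
    have hd : (Matrix.diagonal (fun i => 1 - pC i)).PosSemidef := by
      refine Matrix.posSemidef_diagonal_iff.mpr fun i => ?_
      simp only [hpC]
      split_ifs <;> simp
    exact hd.mul_mul_conjTranspose_same U
  · have hGS : G * (Matrix.posSemidef_conjTranspose_mul_self A).sqrt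
        = U * Matrix.diagonal pC * Uᴴ := by
      rw [hSspec, hGdef, hmul, e3]
    have hAP : A * (U * Matrix.diagonal pC * Uᴴ) = A := by
      have hPH : (U * Matrix.diagonal pC * Uᴴ)ᴴ = U * Matrix.diagonal pC * Uᴴ :=
        hdiagH pC (fun i => by simp only [hpC]; split_ifs <;> simp)
      set B : Matrix ι ι ℂ := A * (1 - (U * Matrix.diagonal pC * Uᴴ)) with hBdef
      have hB0 : B = 0 := by
        rw [← Matrix.conjTranspose_mul_self_eq_zero]
        have h1 : Bᴴ = (1 - (U * Matrix.diagonal pC * Uᴴ)) * Aᴴ := by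
          rw [hBdef, Matrix.conjTranspose_mul, Matrix.conjTranspose_sub, hPH,
            Matrix.conjTranspose_one]
        calc Bᴴ * B
            = (1 - (U * Matrix.diagonal pC * Uᴴ)) * (Aᴴ * A) *
                (1 - (U * Matrix.diagonal pC * Uᴴ)) := by
              rw [h1, hBdef]; simp only [Matrix.mul_assoc]
          _ = 0 := by
              rw [hspec, hsubdiag, hmul, hmul, e4, Matrix.diagonal_zero,
                Matrix.mul_zero, Matrix.zero_mul]
      have h2 : A - A * (U * Matrix.diagonal pC * Uᴴ) = 0 := by
        have h3 := hB0
        rwa [hBdef, Matrix.mul_sub, Matrix.mul_one] at h3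
      rw [sub_eq_zero] at h2
      exact h2.symm
    rw [hVdef, Matrix.mul_assoc, hGS, hAP]
end Polar

section Triangle
set_option linter.unusedSectionVars false
set_option maxHeartbeats 1000000
variable {ι : Type*} [Fintype ι] [DecidableEq ι]

lemma cs_dot (x y : ι → ℂ) :
    (dotProduct (star x) y).re ≤
      Real.sqrt (dotProduct (star x) x).re * Real.sqrt (dotProduct (star y) y).re := by
  have h1 : dotProduct (star x) y = inner ℂ (WithLp.toLp 2 x) (WithLp.toLp 2 y) := by
    rw [EuclideanSpace.inner_toLp_toLp, dotProduct_comm]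
  have h2 : dotProduct (star x) x = inner ℂ (WithLp.toLp 2 x) (WithLp.toLp 2 x) := by
    rw [EuclideanSpace.inner_toLp_toLp, dotProduct_comm]
  have h3 : dotProduct (star y) y = inner ℂ (WithLp.toLp 2 y) (WithLp.toLp 2 y) := by
    rw [EuclideanSpace.inner_toLp_toLp, dotProduct_comm]
  set x' := WithLp.toLp 2 x
  set y' := WithLp.toLp 2 y
  rw [h1, h2, h3]
  calc (inner ℂ x' y').re ≤ ‖inner ℂ x' y'‖ := Complex.re_le_norm _
    _ ≤ ‖x'‖ * ‖y'‖ := norm_inner_le_norm x' y'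
    _ = Real.sqrt (Complex.re (inner ℂ x' x')) * Real.sqrt (Complex.re (inner ℂ y' y')) := by
        rw [@norm_eq_sqrt_re_inner ℂ, @norm_eq_sqrt_re_inner ℂ]
        simp [RCLike.re_to_complex]

lemma dot_shift (W : Matrix ι ι ℂ) (u y : ι → ℂ) :
    dotProduct (star u) (Wᴴ *ᵥ y) = dotProduct (star (W *ᵥ u)) y := by
  rw [Matrix.star_mulVec, dotProduct_mulVec]

lemma contraction_dot (W : Matrix ι ι ℂ) (hW : (1 - Wᴴ * W).PosSemidef)
    (u : ι → ℂ) (hu : dotProduct (star u) u = 1) :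
    (dotProduct (star (W *ᵥ u)) (W *ᵥ u)).re ≤ 1 := by
  have h := hW.dotProduct_mulVec_nonneg u
  rw [Matrix.sub_mulVec, Matrix.one_mulVec, dotProduct_sub, hu] at h
  have h2 := (Complex.le_def.mp h).1
  simp only [Complex.zero_re, Complex.sub_re, Complex.one_re] at h2
  have h3 : dotProduct (star (W *ᵥ u)) (W *ᵥ u)
      = dotProduct (star u) ((Wᴴ * W) *ᵥ u) := by
    rw [← Matrix.mulVec_mulVec, dot_shift]
  rw [h3]; linarith

lemma entry_re_le (W V : Matrix ι ι ℂ) (hW : (1 - Wᴴ * W).PosSemidef)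
    (hV : (1 - Vᴴ * V).PosSemidef)
    (u : ι → ℂ) (hu : dotProduct (star u) u = 1) :
    (dotProduct (star u) ((Wᴴ * V) *ᵥ u)).re ≤ 1 := by
  rw [← Matrix.mulVec_mulVec, dot_shift]
  refine le_trans (cs_dot _ _) ?_
  have b1 := contraction_dot W hW u hu
  have b2 := contraction_dot V hV u hu
  have n1 : 0 ≤ (dotProduct (star (W *ᵥ u)) (W *ᵥ u)).re :=
    (Complex.le_def.mp (dotProduct_star_self_nonneg (W *ᵥ u))).1
  have n2 : 0 ≤ (dotProduct (star (V *ᵥ u)) (V *ᵥ u)).re :=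
    (Complex.le_def.mp (dotProduct_star_self_nonneg (V *ᵥ u))).1
  have s1 : Real.sqrt (dotProduct (star (W *ᵥ u)) (W *ᵥ u)).re ≤ 1 := by
    rw [show (1:ℝ) = Real.sqrt 1 by simp]
    exact Real.sqrt_le_sqrt b1
  have s2 : Real.sqrt (dotProduct (star (V *ᵥ u)) (V *ᵥ u)).re ≤ 1 := by
    rw [show (1:ℝ) = Real.sqrt 1 by simp]
    exact Real.sqrt_le_sqrt b2
  calc Real.sqrt _ * Real.sqrt _ ≤ 1 * 1 :=
        mul_le_mul s1 s2 (Real.sqrt_nonneg _) (by norm_num)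
    _ = 1 := by norm_num

lemma entry_conj_eq (B U : Matrix ι ι ℂ) (i : ι) :
    (Uᴴ * B * U) i i = dotProduct (star (fun a => U a i)) (B *ᵥ (fun a => U a i)) := by
  simp only [Matrix.mul_apply, Matrix.conjTranspose_apply, Matrix.mulVec, dotProduct,
    Finset.sum_mul, Finset.mul_sum, Pi.star_apply]
  rw [Finset.sum_comm]
  refine Finset.sum_congr rfl fun a _ => Finset.sum_congr rfl fun b _ => by ring

lemma entry_one_eq (U : Matrix ι ι ℂ) (i : ι) :
    (Uᴴ * U) i i = dotProduct (star (fun a => U a i)) (fun a => U a i) := by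
  simp only [Matrix.mul_apply, Matrix.conjTranspose_apply, dotProduct, Pi.star_apply]

lemma re_trace_triple {S : Matrix ι ι ℂ} (hS : S.PosSemidef) (W V : Matrix ι ι ℂ)
    (hW : (1 - Wᴴ * W).PosSemidef) (hV : (1 - Vᴴ * V).PosSemidef) :
    ((Wᴴ * V * S).trace).re ≤ (S.trace).re := by
  set U : Matrix ι ι ℂ := (hS.1.eigenvectorUnitary : Matrix ι ι ℂ) with hUdef
  set lam : ι → ℝ := hS.1.eigenvalues with hlamdef
  have hlam0 : ∀ i, 0 ≤ lam i := hS.eigenvalues_nonneg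
  have hUU : Uᴴ * U = 1 := by
    rw [← Matrix.star_eq_conjTranspose]
    exact Matrix.mem_unitaryGroup_iff'.mp hS.1.eigenvectorUnitary.2
  set lamC : ι → ℂ := fun i => ((lam i : ℝ) : ℂ) with hlamC
  have hspec : S = U * Matrix.diagonal lamC * Uᴴ := by
    have h := hS.1.spectral_theorem
    rw [Unitary.conjStarAlgAut_apply] at h
    rw [← Matrix.star_eq_conjTranspose U]
    exact h
  have hstr : (S.trace).re = ∑ i, lam i := by
    conv_lhs => rw [hspec]
    rw [Matrix.trace_mul_comm, ← Matrix.mul_assoc, hUU, Matrix.one_mul, Matrix.trace_diagonal]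
    rw [Complex.re_sum]
    simp [hlamC]
  have h1 : Wᴴ * V * S = (Wᴴ * (V * (U * Matrix.diagonal lamC))) * Uᴴ := by
    rw [hspec]; simp only [Matrix.mul_assoc]
  have h2 : Uᴴ * (Wᴴ * (V * (U * Matrix.diagonal lamC)))
      = (Uᴴ * (Wᴴ * V) * U) * Matrix.diagonal lamC := by
    simp only [Matrix.mul_assoc]
  have h3 : (Wᴴ * V * S).trace = ∑ i, (Uᴴ * (Wᴴ * V) * U) i i * lamC i := by
    rw [h1, Matrix.trace_mul_comm, h2]
    simp [Matrix.trace, Matrix.diag, Matrix.mul_diagonal]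
  rw [h3, Complex.re_sum, hstr]
  refine Finset.sum_le_sum fun i _ => ?_
  have hre : ((Uᴴ * (Wᴴ * V) * U) i i * lamC i).re = ((Uᴴ * (Wᴴ * V) * U) i i).re * lam i := by
    simp [hlamC, Complex.mul_re]
  rw [hre]
  have hu : dotProduct (star (fun a => U a i)) (fun a => U a i) = 1 := by
    rw [← entry_one_eq, hUU, Matrix.one_apply_eq]
  have hb : ((Uᴴ * (Wᴴ * V) * U) i i).re ≤ 1 := by
    rw [entry_conj_eq]
    exact entry_re_le W V hW hV _ hu
  calc ((Uᴴ * (Wᴴ * V) * U) i i).re * lam i ≤ 1 * lam i :=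
        mul_le_mul_of_nonneg_right hb (hlam0 i)
    _ = lam i := one_mul _

theorem traceNorm_add_le (A B : Matrix ι ι ℂ) :
    traceNorm (A + B) ≤ traceNorm A + traceNorm B := by
  obtain ⟨V, hV, hVA, -⟩ := exists_polar (A + B)
  have h0 : traceNorm (A + B) = ((Vᴴ * (A + B)).trace).re := by
    rw [hVA]; rfl
  rw [h0, Matrix.mul_add, Matrix.trace_add, Complex.add_re]
  have hb : ∀ C : Matrix ι ι ℂ, ((Vᴴ * C).trace).re ≤ traceNorm C := by
    intro C
    obtain ⟨Wc, hWc, hWA, hWS⟩ := exists_polar C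
    have h1 : Vᴴ * C = Vᴴ * Wc * (Matrix.posSemidef_conjTranspose_mul_self C).sqrt := by
      rw [Matrix.mul_assoc, hWS]
    rw [h1]
    exact re_trace_triple (Matrix.posSemidef_conjTranspose_mul_self C).posSemidef_sqrt
      V Wc hV hWc
  exact add_le_add (hb A) (hb B)

theorem traceNorm_sum_le {κ : Type*} (s : Finset κ) (M : κ → Matrix ι ι ℂ) :
    traceNorm (∑ j ∈ s, M j) ≤ ∑ j ∈ s, traceNorm (M j) := by
  classical
  induction s using Finset.induction_on with
  | empty => simp [TNAux.traceNorm_zero]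
  | insert a s' hj ih =>
    rw [Finset.sum_insert hj, Finset.sum_insert hj]
    exact le_trans (traceNorm_add_le _ _) (by linarith)

end Triangle

section Frob
set_option linter.unusedSectionVars false
variable {ι : Type*} [Fintype ι] [DecidableEq ι]

theorem traceNorm_nonneg' (M : Matrix ι ι ℂ) (hdiag : ∀ i,
    0 ≤ (((Matrix.posSemidef_conjTranspose_mul_self M).sqrt) i i).re) : 0 ≤ traceNorm M := by
  rw [traceNorm_eq]
  rw [Matrix.trace, Complex.re_sum]
  exact Finset.sum_nonneg fun i _ => hdiag i

lemma psd_diag_re_nonneg {S : Matrix ι ι ℂ} (hS : S.PosSemidef) (i : ι) : 0 ≤ (S i i).re := by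
  have h := hS.dotProduct_mulVec_nonneg (Pi.single i 1)
  have h2 : dotProduct (star (Pi.single i 1)) (S *ᵥ (Pi.single i 1)) = S i i := by
    simp [dotProduct, Matrix.mulVec, Pi.single_apply, apply_ite,
      Finset.mul_sum, Finset.sum_ite_eq, Finset.sum_ite_eq']
  rw [h2] at h
  exact (Complex.le_def.mp h).1

theorem traceNorm_le_frob (M : Matrix ι ι ℂ) :
    traceNorm M ≤ Real.sqrt (Fintype.card ι) * Real.sqrt (((Mᴴ * M).trace).re) := by
  set S := (Matrix.posSemidef_conjTranspose_mul_self M).sqrt with hSdef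
  have hS : S.PosSemidef := (Matrix.posSemidef_conjTranspose_mul_self M).posSemidef_sqrt
  have hSS : S * S = Mᴴ * M := (Matrix.posSemidef_conjTranspose_mul_self M).sqrt_mul_self
  have hherm : Sᴴ = S := hS.1
  have htr : traceNorm M = ∑ i, (S i i).re := by
    rw [traceNorm_eq]
    rw [← hSdef, Matrix.trace, Complex.re_sum]
    rfl
  have hdiag : ∀ i, 0 ≤ (S i i).re := psd_diag_re_nonneg hS
  have hfrob : ∑ i, Complex.normSq (S i i) ≤ ((Mᴴ * M).trace).re := by
    have hexp : ((Mᴴ * M).trace).re = ∑ i, ∑ j, Complex.normSq (S j i) := by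
      rw [← hSS]
      conv_lhs => rw [show S * S = Sᴴ * S by rw [hherm]]
      rw [Matrix.trace, Complex.re_sum]
      refine Finset.sum_congr rfl fun i _ => ?_
      rw [show (Sᴴ * S).diag i = ∑ j, (starRingEnd ℂ) (S j i) * S j i by
        simp [Matrix.diag, Matrix.mul_apply, Matrix.conjTranspose_apply]]
      rw [Complex.re_sum]
      refine Finset.sum_congr rfl fun j _ => ?_
      rw [mul_comm, Complex.mul_conj]
      simp
    rw [hexp]
    refine Finset.sum_le_sum fun i _ => ?_
    exact Finset.single_le_sum (f := fun j => Complex.normSq (S j i))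
      (fun j _ => Complex.normSq_nonneg _) (Finset.mem_univ i)
  have hcs : (∑ i, (S i i).re) ^ 2 ≤ (Fintype.card ι : ℝ) * ∑ i, ((S i i).re) ^ 2 := by
    have h := sq_sum_le_card_mul_sum_sq (s := (Finset.univ : Finset ι))
      (f := fun i => (S i i).re)
    simpa [Finset.card_univ] using h
  have hre2 : ∑ i, ((S i i).re) ^ 2 ≤ ∑ i, Complex.normSq (S i i) := by
    refine Finset.sum_le_sum fun i _ => ?_
    rw [Complex.normSq_apply]
    nlinarith [sq_nonneg (S i i).im]
  have h0 : 0 ≤ traceNorm M := by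
    rw [htr]; exact Finset.sum_nonneg fun i _ => hdiag i
  have hX0 : 0 ≤ ((Mᴴ * M).trace).re :=
    le_trans (Finset.sum_nonneg fun i _ => Complex.normSq_nonneg _) hfrob
  have key : traceNorm M ^ 2 ≤ (Fintype.card ι : ℝ) * ((Mᴴ * M).trace).re := by
    rw [htr]
    calc (∑ i, (S i i).re) ^ 2 ≤ (Fintype.card ι : ℝ) * ∑ i, ((S i i).re) ^ 2 := hcs
      _ ≤ (Fintype.card ι : ℝ) * ∑ i, Complex.normSq (S i i) := by
          exact mul_le_mul_of_nonneg_left hre2 (by positivity)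
      _ ≤ (Fintype.card ι : ℝ) * ((Mᴴ * M).trace).re :=
          mul_le_mul_of_nonneg_left hfrob (by positivity)
  calc traceNorm M ≤ Real.sqrt ((Fintype.card ι : ℝ) * ((Mᴴ * M).trace).re) := by
        rw [show traceNorm M = Real.sqrt (traceNorm M ^ 2) by
          rw [Real.sqrt_sq h0]]
        exact Real.sqrt_le_sqrt key
    _ = Real.sqrt (Fintype.card ι) * Real.sqrt (((Mᴴ * M).trace).re) :=
        Real.sqrt_mul (by positivity) _

end Frob

section Specific
set_option linter.unusedSectionVars false
set_option maxHeartbeats 1000000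

/-- The number of elements of a stochastic Lagrangian subspace is `2^k`. -/
lemma stochLag_card (k : ℕ) (T : StochLag k) :
    Fintype.card T.1 = 2 ^ k := by
  have h := Module.card_eq_pow_finrank (K := ZMod 2) (V := T.1)
  rw [h, ZMod.card, T.2.1]

/-- Sum of all (0/1) entries-squared of `Rvec`. -/
lemma rvec_frob (k N : ℕ) {ι : Type*} (reg : Fin N → ι) (Tv : ι → StochLag k) :
    ((((Rvec k reg Tv)ᴴ * (Rvec k reg Tv)).trace).re) = (2 : ℝ) ^ (k * N) := by
  classical
  set W := (Fin k → ZMod 2) × (Fin k → ZMod 2)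
  set κ := Fin k → Fin N → ZMod 2
  set R := Rvec k reg Tv with hR
  set g : Fin N → W → ℝ := fun i w => if w ∈ (Tv (reg i)).1 then 1 else 0 with hg
  have hentry : ∀ X Y : κ, Complex.normSq (R Y X) = ∏ i, g i (fun a => Y a i, fun a => X a i) := by
    intro X Y
    rw [hR]
    show Complex.normSq (∏ i : Fin N, _) = _
    rw [map_prod Complex.normSq]
    refine Finset.prod_congr rfl fun i _ => ?_
    simp only [hg]
    split_ifs <;> simp
  have htr : (((Rᴴ * R).trace).re) = ∑ X : κ, ∑ Y : κ, Complex.normSq (R Y X) := by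
    rw [Matrix.trace, Complex.re_sum]
    refine Finset.sum_congr rfl fun X _ => ?_
    rw [show (Rᴴ * R).diag X = ∑ Y, (starRingEnd ℂ) (R Y X) * R Y X by
      simp [Matrix.diag, Matrix.mul_apply, Matrix.conjTranspose_apply]]
    rw [Complex.re_sum]
    refine Finset.sum_congr rfl fun Y _ => ?_
    rw [mul_comm, Complex.mul_conj]
    simp
  rw [htr]
  have hE : ∑ X : κ, ∑ Y : κ, Complex.normSq (R Y X)
      = ∑ Z : Fin N → W, ∏ i, g i (Z i) := by
    rw [← Finset.sum_product']
    let e : (κ × κ) ≃ (Fin N → W) :=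
      { toFun := fun p => fun i => (fun a => p.2 a i, fun a => p.1 a i)
        invFun := fun Z => (fun a i => (Z i).2 a, fun a i => (Z i).1 a)
        left_inv := fun p => rfl
        right_inv := fun Z => rfl }
    refine Fintype.sum_equiv e _ _ fun p => ?_
    rw [hentry p.1 p.2]
    rfl
  rw [hE]
  have hfub : ∑ Z : Fin N → W, ∏ i, g i (Z i) = ∏ i : Fin N, ∑ w : W, g i w := by
    rw [Finset.prod_univ_sum (t := fun _ : Fin N => (Finset.univ : Finset W))]
    rw [Fintype.piFinset_univ]
  rw [hfub]
  have hcard : ∀ i : Fin N, ∑ w : W, g i w = (2 : ℝ) ^ k := by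
    intro i
    rw [hg]
    simp only []
    rw [Finset.sum_boole]
    have : (Finset.univ.filter (fun w : W => w ∈ (Tv (reg i)).1)).card
        = Fintype.card (Tv (reg i)).1 := by
      rw [Fintype.card_subtype]
      try rfl
    rw [this, stochLag_card]
    push_cast
    try norm_num
  rw [Finset.prod_congr rfl fun i _ => hcard i]
  rw [Finset.prod_const, Finset.card_univ, Fintype.card_fin, ← pow_mul]

lemma traceNorm_Rvec_le (k N : ℕ) {ι : Type*} (reg : Fin N → ι) (Tv : ι → StochLag k) :
    traceNorm (Rvec k reg Tv) ≤ (2 : ℝ) ^ (N * k) := by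
  refine le_trans (traceNorm_le_frob _) ?_
  rw [rvec_frob k N reg Tv]
  have hcard : (Fintype.card (Fin k → Fin N → ZMod 2) : ℝ) = (2 : ℝ) ^ (k * N) := by
    rw [Fintype.card_fun, Fintype.card_fun, ZMod.card, Fintype.card_fin, Fintype.card_fin]
    push_cast
    rw [← pow_mul]
    ring_nf
  rw [hcard]
  rw [← Real.sqrt_mul (by positivity), ← pow_add]
  rw [show k * N + k * N = (N * k) * 2 by ring, pow_mul]
  rw [Real.sqrt_sq (by positivity)]

lemma prod_one_add_le {m : ℕ} (a : ℕ → ℝ) (ha : ∀ i, 0 ≤ a i)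
    (hsum : ∑ i ∈ Finset.range m, a i ≤ 1 / 2) :
    ∏ i ∈ Finset.range m, (1 + a i) ≤ 1 + 2 * ∑ i ∈ Finset.range m, a i := by
  induction m with
  | zero => simp
  | succ m ih =>
    have hsub : ∑ i ∈ Finset.range m, a i ≤ ∑ i ∈ Finset.range (m + 1), a i := by
      refine Finset.sum_le_sum_of_subset_of_nonneg
        (Finset.range_subset_range.mpr (Nat.le_succ m)) fun i _ _ => ha i
    have hs' : ∑ i ∈ Finset.range m, a i ≤ 1 / 2 := le_trans hsub hsum
    have h1 := ih hs'
    have hS0 : (0:ℝ) ≤ ∑ i ∈ Finset.range m, a i :=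
      Finset.sum_nonneg fun i _ => ha i
    rw [Finset.prod_range_succ, Finset.sum_range_succ]
    have hmul := mul_le_mul_of_nonneg_right h1 (show (0:ℝ) ≤ 1 + a m by linarith [ha m])
    have ham := ha m
    have h2Sm : ∑ i ∈ Finset.range m, a i ≤ 1/2 := hs'
    nlinarith [mul_nonneg hS0 ham]

lemma nat_bound {k N : ℕ} (hk : 1 ≤ k) (h : k * 2 ^ k ≤ 2 ^ (N + 2)) :
    2 ^ k - 2 ≤ 2 ^ N := by
  have hpow : 2 ^ (N + 2) = 4 * 2 ^ N := by ring
  rcases le_or_gt 4 k with h4 | h4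
  · have h1 : 4 * 2 ^ k ≤ k * 2 ^ k := Nat.mul_le_mul_right _ h4
    have h2 : 4 * 2 ^ k ≤ 4 * 2 ^ N := by omega
    have h3 : 2 ^ k ≤ 2 ^ N := by omega
    omega
  · interval_cases k <;> simp_all <;> omega
end Specific

/-- A state ensemble whose `k`-th moment satisfies the `ε`-approximate uniformity
condition forms a stabilizer state `k`-design with additive error `ε + k·2^{k-N}`. -/
theorem uniformity_implies_stabilizer_design
    (k N L : ℕ) (hk : 1 ≤ k) (hN : 1 ≤ N)
    (hkN : k * 2 ^ k ≤ 2 ^ (N + 2))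
    (reg : Fin N → Fin L)
    (f : (Fin L → StochLag k) → ℂ)
    (ε : ℝ) (hε : 0 ≤ ε)
    (hf : ∑ Tv : Fin L → StochLag k, ‖f Tv‖ ≤ ε)
    (ρ : Matrix (Fin k → Fin N → ZMod 2) (Fin k → Fin N → ZMod 2) ℂ)
    (hρ : ρ = ((2 : ℂ) ^ (N * k))⁻¹ •
      ((∑ T : StochLag k, RN k N T) +
        ∑ Tv : Fin L → StochLag k, f Tv • Rvec k reg Tv))
    (hCpsd : (rhoC k N).PosSemidef) (hCtr : (rhoC k N).trace = 1) :
    traceNorm (ρ - rhoC k N) ≤ ε + (k : ℝ) * (2 : ℝ) ^ ((k : ℝ) - (N : ℝ)) := by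

  classical
  set zR : ℝ := 2 ^ N * ∏ i ∈ Finset.range (k - 1), ((2 : ℝ) ^ N + 2 ^ i) with hzR
  have hzpos : 0 < zR := by
    rw [hzR]
    have : ∀ i ∈ Finset.range (k-1), (0:ℝ) < (2:ℝ)^N + 2^i := fun i _ => by positivity
    positivity
  have hZr : Zc N k = ((zR : ℝ) : ℂ) := by
    rw [Zc, hzR]
    push_cast
    ring
  have hZne : Zc N k ≠ 0 := by
    rw [hZr]
    exact_mod_cast hzpos.ne'
  set SR := ∑ T : StochLag k, RN k N T with hSR
  set Sf := ∑ Tv : Fin L → StochLag k, f Tv • Rvec k reg Tv with hSf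
  have hrhoC : rhoC k N = (Zc N k)⁻¹ • SR := rfl
  have hSReq : SR = (Zc N k) • rhoC k N := by
    rw [hrhoC, smul_smul, mul_inv_cancel₀ hZne, one_smul]
  have hsplit : ρ - rhoC k N
      = (((2:ℂ) ^ (N*k))⁻¹ - (Zc N k)⁻¹) • SR + ((2:ℂ) ^ (N*k))⁻¹ • Sf := by
    rw [hρ, hrhoC, smul_add, sub_smul]
    abel
  have htnC : traceNorm (rhoC k N) = 1 := by
    rw [TNAux.traceNorm_psd hCpsd, hCtr]
    simp
  have htnSR : traceNorm SR = zR := by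
    rw [hSReq, TNAux.traceNorm_smul, htnC, hZr]
    rw [Complex.norm_real, Real.norm_eq_abs, abs_of_pos hzpos, mul_one]
  have hp2 : (0:ℝ) < (2:ℝ) ^ (N*k) := by positivity
  have hk1 : k - 1 + 1 = k := Nat.succ_pred_eq_of_pos hk
  have h2z : (2:ℝ) ^ (N*k) ≤ zR := by
    rw [hzR]
    have h1 : ((2:ℝ)^N)^(k-1) ≤ ∏ i ∈ Finset.range (k-1), ((2:ℝ)^N + 2^i) := by
      calc ((2:ℝ)^N)^(k-1) = ∏ _i ∈ Finset.range (k-1), (2:ℝ)^N := by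
            rw [Finset.prod_const, Finset.card_range]
        _ ≤ ∏ i ∈ Finset.range (k-1), ((2:ℝ)^N + 2^i) := by
            refine Finset.prod_le_prod (fun i _ => by positivity) (fun i _ => by
              have : (0:ℝ) ≤ 2^i := by positivity
              linarith)
    calc (2:ℝ)^(N*k) = ((2:ℝ)^N)^k := by rw [pow_mul]
      _ = 2^N * ((2:ℝ)^N)^(k-1) := by
          conv_lhs => rw [← hk1]
          rw [pow_succ]
          ring
      _ ≤ 2^N * ∏ i ∈ Finset.range (k-1), ((2:ℝ)^N + 2^i) := by
          refine mul_le_mul_of_nonneg_left h1 (by positivity)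
  have habs1 : ‖(((2:ℂ) ^ (N*k))⁻¹ - (Zc N k)⁻¹)‖
      = ((2:ℝ) ^ (N*k))⁻¹ - zR⁻¹ := by
    have hc : (((2:ℂ) ^ (N*k))⁻¹ - (Zc N k)⁻¹)
        = ((((2:ℝ) ^ (N*k))⁻¹ - zR⁻¹ : ℝ) : ℂ) := by
      rw [hZr]
      push_cast
      ring
    rw [hc, Complex.norm_real, Real.norm_eq_abs]
    refine abs_of_nonneg ?_
    have hi := inv_anti₀ hp2 h2z
    linarith
  have habs2 : ‖((2:ℂ) ^ (N*k))⁻¹‖ = ((2:ℝ) ^ (N*k))⁻¹ := by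
    rw [norm_inv, norm_pow, Complex.norm_two]
  have hA : zR * ((2:ℝ)^(N*k))⁻¹ = ∏ i ∈ Finset.range (k-1), (1 + (2:ℝ)^i / 2^N) := by
    have hprod : ∏ i ∈ Finset.range (k-1), (1 + (2:ℝ)^i / 2^N)
        = (∏ i ∈ Finset.range (k-1), ((2:ℝ)^N + 2^i)) / ((2:ℝ)^N)^(k-1) := by
      rw [eq_div_iff (by positivity)]
      rw [show ((2:ℝ)^N)^(k-1) = ∏ _i ∈ Finset.range (k-1), (2:ℝ)^N by
        rw [Finset.prod_const, Finset.card_range]]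
      rw [← Finset.prod_mul_distrib]
      refine Finset.prod_congr rfl fun i _ => ?_
      field_simp
      try ring
    rw [hprod, hzR, pow_mul]
    conv_lhs => rw [← hk1]
    rw [pow_succ]
    have hne : ((2:ℝ)^N)^(k-1) * (2:ℝ)^N ≠ 0 := by positivity
    field_simp
    try ring
    rw [Nat.add_sub_cancel_left]
  have hsumgeom : ∑ i ∈ Finset.range (k-1), (2:ℝ)^i / 2^N
      = ((2:ℝ)^(k-1) - 1) / 2^N := by
    rw [← Finset.sum_div]
    congr 1
    have h := geom_sum_eq (by norm_num : (2:ℝ) ≠ 1) (k-1)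
    rw [h]
    norm_num
  have hcast : (2:ℝ)^k - 2 ≤ (2:ℝ)^N := by
    have hnat := nat_bound hk hkN
    have h2k : (2:ℕ) ≤ 2^k := by
      calc (2:ℕ) = 2^1 := rfl
        _ ≤ 2^k := Nat.pow_le_pow_right (by norm_num) hk
    have hc := (Nat.cast_le (α := ℝ)).mpr hnat
    rw [Nat.cast_sub h2k] at hc
    push_cast at hc
    exact hc
  have h2k1 : (2:ℝ)^(k-1) * 2 = (2:ℝ)^k := by
    rw [← pow_succ, hk1]
  have hhalf : ∑ i ∈ Finset.range (k-1), (2:ℝ)^i / 2^N ≤ 1/2 := by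
    rw [hsumgeom, div_le_iff₀ (by positivity : (0:ℝ) < (2:ℝ)^N)]
    nlinarith
  have hterm1 : (((2:ℝ)^(N*k))⁻¹ - zR⁻¹) * zR ≤ (k:ℝ) * ((2:ℝ)^k / 2^N) := by
    have hexp : (((2:ℝ)^(N*k))⁻¹ - zR⁻¹) * zR = zR * ((2:ℝ)^(N*k))⁻¹ - 1 := by
      rw [sub_mul, inv_mul_cancel₀ hzpos.ne']
      ring
    rw [hexp, hA]
    have hple := prod_one_add_le (fun i => (2:ℝ)^i / 2^N) (fun i => by positivity) hhalf
    have hkk : (1:ℝ) ≤ (k:ℝ) := by exact_mod_cast hk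
    have h2Npos : (0:ℝ) < (2:ℝ)^N := by positivity
    have h2kpos : (0:ℝ) < (2:ℝ)^k := by positivity
    have key : 2 * (((2:ℝ)^(k-1) - 1) / 2^N) ≤ (k:ℝ) * ((2:ℝ)^k / 2^N) := by
      rw [← mul_div_assoc, ← mul_div_assoc, div_le_div_iff₀ h2Npos h2Npos]
      have h5 : (2:ℝ)^k - 2 ≤ (k:ℝ) * 2^k := by nlinarith
      nlinarith [mul_le_mul_of_nonneg_right h5 h2Npos.le]
    have hchain := le_trans hple (by rw [hsumgeom]; linarith :
      1 + 2 * ∑ i ∈ Finset.range (k-1), (2:ℝ)^i / 2^N ≤ 1 + (k:ℝ) * ((2:ℝ)^k / 2^N))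
    linarith
  have htnSf : traceNorm Sf ≤ ε * (2:ℝ)^(N*k) := by
    rw [hSf]
    refine le_trans (traceNorm_sum_le _ _) ?_
    calc ∑ Tv : Fin L → StochLag k, traceNorm (f Tv • Rvec k reg Tv)
        = ∑ Tv : Fin L → StochLag k, ‖f Tv‖ * traceNorm (Rvec k reg Tv) := by
          exact Finset.sum_congr rfl fun Tv _ => TNAux.traceNorm_smul _ _
      _ ≤ ∑ Tv : Fin L → StochLag k, ‖f Tv‖ * (2:ℝ)^(N*k) := by
          refine Finset.sum_le_sum fun Tv _ => ?_
          exact mul_le_mul_of_nonneg_left (traceNorm_Rvec_le k N reg Tv)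
            (norm_nonneg _)
      _ = (∑ Tv : Fin L → StochLag k, ‖f Tv‖) * (2:ℝ)^(N*k) := by
          rw [Finset.sum_mul]
      _ ≤ ε * (2:ℝ)^(N*k) := mul_le_mul_of_nonneg_right hf hp2.le
  have hrpow : (2:ℝ) ^ ((k:ℝ) - (N:ℝ)) = (2:ℝ)^k / (2:ℝ)^N := by
    rw [Real.rpow_sub (by norm_num), Real.rpow_natCast, Real.rpow_natCast]
  calc traceNorm (ρ - rhoC k N)
      ≤ traceNorm ((((2:ℂ)^(N*k))⁻¹ - (Zc N k)⁻¹) • SR)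
        + traceNorm (((2:ℂ)^(N*k))⁻¹ • Sf) := by
        rw [hsplit]
        exact traceNorm_add_le _ _
    _ = (((2:ℝ)^(N*k))⁻¹ - zR⁻¹) * zR + ((2:ℝ)^(N*k))⁻¹ * traceNorm Sf := by
        rw [TNAux.traceNorm_smul, TNAux.traceNorm_smul, habs1, htnSR, habs2]
    _ ≤ (k:ℝ) * ((2:ℝ)^k / 2^N) + ((2:ℝ)^(N*k))⁻¹ * (ε * (2:ℝ)^(N*k)) := by
        refine add_le_add hterm1 ?_
        have h0 : (0:ℝ) ≤ ((2:ℝ)^(N*k))⁻¹ := by positivity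
        have htn0 : 0 ≤ traceNorm Sf ∨ True := Or.inr trivial
        exact mul_le_mul_of_nonneg_left htnSf h0
    _ = ε + (k:ℝ) * ((2:ℝ)^k / 2^N) := by
        field_simp
        ring
    _ = ε + (k:ℝ) * (2:ℝ) ^ ((k:ℝ) - (N:ℝ)) := by rw [hrpow]
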